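/- arXiv:0910.2087 — 2 statements merged into one kernel-verified Lean document; each statement's English description precedes it below -/
import Mathlib

section
/- For every real ξ ≠ 0 and every ε > 0, the complex number D = −i ξ (1 − coth ξ) + ε² ξ coth ξ satisfies |D| ≥ ε² |ξ|; in particular D ≠ 0. Consequently, for any complex number φ̂, the quantity β̂^ε = φ̂ / D satisfies |β̂^ε| ≤ |φ̂| / (ε² |ξ|). -/
/-! The imaginary part of `D` can be discarded: `‖D‖ ≥ |Re D| = ε² |ξ| |coth ξ|`, and
`|coth ξ| ≥ 1` because `|sinh ξ| < cosh ξ`. Dividing by `D` then costs at most a factor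
`1 / (ε² |ξ|)`. -/

/-- Real hyperbolic cotangent coth ξ = cosh ξ / sinh ξ. -/
noncomputable def realCoth (ξ : ℝ) : ℝ := Real.cosh ξ / Real.sinh ξ

/-- The denominator D = −i ξ (1 − coth ξ) + ε² ξ coth ξ. -/
noncomputable def stripDen (ξ ε : ℝ) : ℂ :=
  -Complex.I * (ξ : ℂ) * (1 - (realCoth ξ : ℂ)) + (ε : ℂ) ^ 2 * (ξ : ℂ) * (realCoth ξ : ℂ)

lemma Real.abs_sinh_lt_cosh (x : ℝ) : |Real.sinh x| < Real.cosh x := by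
  rw [Real.abs_sinh, ← Real.cosh_abs]
  exact Real.sinh_lt_cosh |x|

lemma one_le_abs_realCoth {ξ : ℝ} (hξ : ξ ≠ 0) : 1 ≤ |realCoth ξ| := by
  have hsinh : 0 < |Real.sinh ξ| := abs_pos.mpr (Real.sinh_ne_zero.mpr hξ)
  rw [realCoth, abs_div, abs_of_pos (Real.cosh_pos ξ), one_le_div hsinh]
  exact (Real.abs_sinh_lt_cosh ξ).le

lemma stripDen_re (ξ ε : ℝ) : (stripDen ξ ε).re = ε ^ 2 * ξ * realCoth ξ := by
  simp [stripDen, ← Complex.ofReal_pow]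

lemma mul_abs_le_norm_stripDen {ξ : ℝ} (hξ : ξ ≠ 0) (ε : ℝ) :
    ε ^ 2 * |ξ| ≤ ‖stripDen ξ ε‖ :=
  calc ε ^ 2 * |ξ| ≤ ε ^ 2 * |ξ| * |realCoth ξ| :=
        le_mul_of_one_le_right (by positivity) (one_le_abs_realCoth hξ)
    _ = |(stripDen ξ ε).re| := by rw [stripDen_re, abs_mul, abs_mul, abs_sq]
    _ ≤ ‖stripDen ξ ε‖ := Complex.abs_re_le_norm _

lemma norm_div_le_of_le_norm {𝕜 : Type*} [NormedDivisionRing 𝕜] {c : ℝ} {z : 𝕜} (hc : 0 < c)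
    (hz : c ≤ ‖z‖) (φ : 𝕜) :
    ‖φ / z‖ ≤ ‖φ‖ / c := by
  rw [norm_div]
  exact div_le_div_of_nonneg_left (norm_nonneg φ) hc hz

/-- for real ξ ≠ 0 and ε > 0, |D| ≥ ε²|ξ|, in particular D ≠ 0, and
for any φ̂ ∈ ℂ the quantity β̂^ε = φ̂/D satisfies |β̂^ε| ≤ |φ̂|/(ε²|ξ|). -/
theorem strip_denominator_lower_bound (ξ ε : ℝ) (hξ : ξ ≠ 0) (hε : 0 < ε) :
    ε ^ 2 * |ξ| ≤ ‖stripDen ξ ε‖ ∧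
    stripDen ξ ε ≠ 0 ∧
    ∀ φ : ℂ, ‖φ / stripDen ξ ε‖ ≤ ‖φ‖ / (ε ^ 2 * |ξ|) := by
  have hpos : 0 < ε ^ 2 * |ξ| := by positivity
  have hbound := mul_abs_le_norm_stripDen hξ ε
  exact ⟨hbound, norm_pos_iff.mp (hpos.trans_le hbound), norm_div_le_of_le_norm hpos hbound⟩
end

section
/- Take the datum φ̂(ξ) = e^{−|ξ|} and define β̂⁰(ξ) = φ̂(ξ) / (−i ξ (1 − coth ξ)) for ξ ≠ 0. Then 2 ξ e^{−ξ} |β̂⁰(ξ)| → 1 as ξ → +∞; in particular, for every N and every C > 0, |β̂⁰(ξ)| > C (1 + |ξ|)^N for all sufficiently large ξ, so β̂⁰ is not polynomially bounded. -/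
open Filter

/-- The limit Fourier boundary trace β̂⁰(ξ) = e^{−|ξ|} / (−i ξ (1 − coth ξ)). -/
noncomputable def betaZero (ξ : ℝ) : ℂ :=
  (Real.exp (-|ξ|) : ℂ) / (-Complex.I * (ξ : ℂ) * (1 - (realCoth ξ : ℂ)))

/-!
For `ξ > 0` one has `1 - coth ξ = -e^{-ξ} / sinh ξ`, so the factor `e^{-ξ}` of the datum cancels
and `|β̂⁰(ξ)| = sinh ξ / ξ`. Hence `2 ξ e^{-ξ} |β̂⁰(ξ)| = 1 - e^{-2ξ} → 1`, and dividing
`C (1 + ξ)^N` by `|β̂⁰(ξ)|` gives `2 C ξ (1 + ξ)^N e^{-ξ} / (1 - e^{-2ξ}) → 0`.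
-/

open Real Topology

lemma one_sub_realCoth {ξ : ℝ} (hξ : ξ ≠ 0) : 1 - realCoth ξ = -(exp (-ξ) / sinh ξ) := by
  have hs : sinh ξ ≠ 0 := sinh_ne_zero.2 hξ
  rw [realCoth, ← cosh_sub_sinh]
  field_simp
  ring

lemma norm_betaZero {ξ : ℝ} (hξ : 0 < ξ) : ‖betaZero ξ‖ = sinh ξ / ξ := by
  have hs : 0 < sinh ξ := sinh_pos_iff.2 hξ
  have hcoth : (1 : ℂ) - (realCoth ξ : ℂ) = ((-(exp (-ξ) / sinh ξ) : ℝ) : ℂ) := by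
    rw [← one_sub_realCoth hξ.ne', Complex.ofReal_sub, Complex.ofReal_one]
  rw [betaZero, hcoth, norm_div]
  simp only [norm_mul, norm_neg, Complex.norm_I, Complex.norm_real, Real.norm_eq_abs, abs_div,
    abs_of_pos hξ, abs_of_pos hs, abs_of_pos (exp_pos _), one_mul]
  field_simp

lemma two_mul_exp_neg_mul_sinh (x : ℝ) : 2 * exp (-x) * sinh x = 1 - exp (-(2 * x)) := by
  have hcancel : exp (-x) * exp x = 1 := by rw [← exp_add, neg_add_cancel, exp_zero]
  rw [sinh_eq, show -(2 * x) = -x + -x by ring, exp_add]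
  linear_combination hcancel

lemma tendsto_mul_one_add_pow_mul_exp_neg (n : ℕ) :
    Tendsto (fun x : ℝ => x * (1 + x) ^ n * exp (-x)) atTop (𝓝 0) := by
  have hshift : Tendsto (fun x : ℝ => (1 + x) ^ (n + 1) * exp (-x)) atTop (𝓝 0) := by
    have := ((tendsto_pow_mul_exp_neg_atTop_nhds_zero (n + 1)).comp
      (tendsto_atTop_add_const_left atTop 1 tendsto_id)).const_mul (exp 1)
    rw [mul_zero] at this
    refine this.congr fun x => ?_
    simp only [Function.comp_apply, id, neg_add, exp_add]
    rw [mul_left_comm, ← mul_assoc (exp 1), ← exp_add, add_neg_cancel, exp_zero, one_mul]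
  refine squeeze_zero' ?_ ?_ hshift
  · filter_upwards [eventually_ge_atTop 0] with x hx
    positivity
  · filter_upwards [eventually_ge_atTop 0] with x hx
    rw [pow_succ']
    gcongr
    linarith

lemma tendsto_two_mul_exp_neg_mul_norm_betaZero :
    Tendsto (fun ξ : ℝ => 2 * ξ * exp (-ξ) * ‖betaZero ξ‖) atTop (𝓝 1) := by
  have hexp : Tendsto (fun ξ : ℝ => 1 - exp (-(2 * ξ))) atTop (𝓝 1) := by
    simpa using (tendsto_exp_neg_atTop_nhds_zero.comp
      (tendsto_id.const_mul_atTop two_pos)).const_sub 1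
  refine hexp.congr' ?_
  filter_upwards [eventually_gt_atTop 0] with ξ hξ
  rw [norm_betaZero hξ, ← two_mul_exp_neg_mul_sinh]
  field_simp

/-- with datum φ̂(ξ) = e^{−|ξ|}, one has 2 ξ e^{−ξ} |β̂⁰(ξ)| → 1 as
ξ → +∞; in particular, for every N and C > 0, |β̂⁰(ξ)| > C (1 + |ξ|)^N for all
sufficiently large ξ, so β̂⁰ is not polynomially bounded. -/
theorem limit_trace_not_tempered :
    Tendsto (fun ξ : ℝ => 2 * ξ * Real.exp (-ξ) * ‖betaZero ξ‖)
      atTop (nhds 1) ∧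
    ∀ (N : ℕ) (C : ℝ), 0 < C →
      ∀ᶠ ξ : ℝ in atTop, C * (1 + |ξ|) ^ N < ‖betaZero ξ‖ := by
  refine ⟨tendsto_two_mul_exp_neg_mul_norm_betaZero, fun N C _ => ?_⟩
  have hratio : Tendsto (fun ξ : ℝ => 2 * C * (ξ * (1 + ξ) ^ N * exp (-ξ)) /
      (2 * ξ * exp (-ξ) * ‖betaZero ξ‖)) atTop (𝓝 0) := by
    have := ((tendsto_mul_one_add_pow_mul_exp_neg N).const_mul (2 * C)).div
      tendsto_two_mul_exp_neg_mul_norm_betaZero one_ne_zero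
    rwa [mul_zero, zero_div] at this
  filter_upwards [hratio.eventually (gt_mem_nhds one_pos), eventually_gt_atTop 0] with ξ hlt hξ
  have hβ : 0 < ‖betaZero ξ‖ := by
    rw [norm_betaZero hξ]
    exact div_pos (sinh_pos_iff.2 hξ) hξ
  have hcancel : 2 * C * (ξ * (1 + ξ) ^ N * exp (-ξ)) / (2 * ξ * exp (-ξ) * ‖betaZero ξ‖) =
      C * (1 + ξ) ^ N / ‖betaZero ξ‖ := by
    field_simp
  rw [abs_of_pos hξ]
  rwa [hcancel, div_lt_one hβ] at hlt
end
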